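/- The deadlocking program P = (val a = actor{ val b = actor{react{n ⇒ a!m}}; react{m ⇒ b!n} }) is not well typed in the refined type system: there exist no (finite) behavioural types T_a, T_b and escape environment Δ such that ∅ ⊢ P ▷ Δ is derivable, because the typing of P would require assumptions a : [?m.T'!n.end] and b : [?n.T''!m.end] where T' = [T''!m.end] and T'' = [T'!n.end] can only be defined mutually recursively, and no finite types satisfy these equations. -/

import Mathlib

set_option maxHeartbeats 1000000

/-! ## Syntax of the actor calculus AC -/

abbrev Name := ℕ
abbrev Var := ℕ
abbrev Label := ℕ

/-- Identifiers range over actor names and variables. -/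
inductive Ident : Type where
  | name : Name → Ident
  | var  : Var → Ident
deriving DecidableEq

/-- Expressions of the actor calculus AC. -/
inductive Expr : Type where
  | nil   : Expr
  | send  : Ident → Label → List Ident → Expr → Expr
  | react : List (Label × List Var × Expr) → Expr
  | spawn : Name → Expr → Expr → Expr

def substI (c : Name) (x : Var) : Ident → Ident
  | .name a => .name a
  | .var y  => if y = x then .name c else .var y

mutual
  /-- Substitution e{c/x} of the name c for the variable x. -/
  def Expr.subst : Name → Var → Expr → Expr
    | _, _, .nil => .nil
    | c, x, .send u m args e =>
        .send (substI c x u) m (args.map (substI c x)) (Expr.subst c x e)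
    | c, x, .react bs => .react (Expr.substB c x bs)
    | c, x, .spawn a e1 e2 => .spawn a (Expr.subst c x e1) (Expr.subst c x e2)
  def Expr.substB : Name → Var → List (Label × List Var × Expr) → List (Label × List Var × Expr)
    | _, _, [] => []
    | c, x, (m, xs, e) :: bs =>
        (m, xs, if x ∈ xs then e else Expr.subst c x e) :: Expr.substB c x bs
end

/-- Simultaneous substitution e{c̃/x̃}. -/
def Expr.substs : Expr → List Name → List Var → Expr
  | e, c :: cs, x :: xs => Expr.substs (Expr.subst c x e) cs xs
  | e, _, _ => e

abbrev Msg := Label × List Name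
abbrev Mailbox := List Msg

/-- Runtime configurations. -/
inductive Config : Type where
  | actor : Name → Mailbox → Expr → Config
  | par   : Config → Config → Config
  | res   : Name → Config → Config
  | expr  : Expr → Config

/-- The null configuration 0 (the terminated top-level expression). -/
def Config.null : Config := .expr .nil

/-- Free occurrence of a name in an expression. -/
inductive FreeIn : Name → Expr → Prop where
  | send_target : ∀ {n m args e}, FreeIn n (.send (.name n) m args e)
  | send_arg : ∀ {n u m args e}, Ident.name n ∈ args → FreeIn n (.send u m args e)
  | send_cont : ∀ {n u m args e}, FreeIn n e → FreeIn n (.send u m args e)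
  | react : ∀ {n bs m xs e}, (m, xs, e) ∈ bs → FreeIn n e → FreeIn n (.react bs)
  | spawn_body : ∀ {n a e1 e2}, n ≠ a → FreeIn n e1 → FreeIn n (.spawn a e1 e2)
  | spawn_cont : ∀ {n a e1 e2}, n ≠ a → FreeIn n e2 → FreeIn n (.spawn a e1 e2)

def fnMail (n : Name) (M : Mailbox) : Prop := ∃ msg ∈ M, n ∈ msg.2

/-- Free occurrence of a name in a configuration. -/
inductive FreeInC : Name → Config → Prop where
  | actor_name : ∀ {a M e}, FreeInC a (.actor a M e)
  | actor_mail : ∀ {n a M e}, fnMail n M → FreeInC n (.actor a M e)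
  | actor_body : ∀ {n a M e}, FreeIn n e → FreeInC n (.actor a M e)
  | parL : ∀ {n F1 F2}, FreeInC n F1 → FreeInC n (.par F1 F2)
  | parR : ∀ {n F1 F2}, FreeInC n F2 → FreeInC n (.par F1 F2)
  | res : ∀ {n a F}, n ≠ a → FreeInC n F → FreeInC n (.res a F)
  | expr : ∀ {n e}, FreeIn n e → FreeInC n (.expr e)

/-- Free names of active actors: n is the name of an active actor of F. -/
inductive ActiveIn : Name → Config → Prop where
  | actor : ∀ {a M e}, ActiveIn a (.actor a M e)
  | parL : ∀ {n F1 F2}, ActiveIn n F1 → ActiveIn n (.par F1 F2)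
  | parR : ∀ {n F1 F2}, ActiveIn n F2 → ActiveIn n (.par F1 F2)
  | res : ∀ {n a F}, n ≠ a → ActiveIn n F → ActiveIn n (.res a F)

/-- Structural congruence. -/
inductive SC : Config → Config → Prop where
  | refl : ∀ {F}, SC F F
  | symm : ∀ {F F'}, SC F F' → SC F' F
  | trans : ∀ {F F' F''}, SC F F' → SC F' F'' → SC F F''
  | par_congr : ∀ {F1 F1' F2 F2'}, SC F1 F1' → SC F2 F2' → SC (.par F1 F2) (.par F1' F2')
  | res_congr : ∀ {a F F'}, SC F F' → SC (.res a F) (.res a F')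
  | res_comm : ∀ {a b F}, SC (.res a (.res b F)) (.res b (.res a F))
  | scope : ∀ {a F F'}, ¬ FreeInC a F → SC (.res a (.par F F')) (.par F (.res a F'))
  | par_nil : ∀ {F}, SC (.par F .null) F
  | par_comm : ∀ {F F'}, SC (.par F F') (.par F' F)
  | par_assoc : ∀ {F1 F2 F3}, SC (.par (.par F1 F2) F3) (.par F1 (.par F2 F3))
  | res_nil : ∀ {a}, SC (.res a .null) .null

/-- Reduction of configurations. -/
inductive Step : Config → Config → Prop where
  | ended : ∀ {a}, Step (.actor a [] .nil) .null
  | topSpawn : ∀ {a e e'},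
      Step (.expr (.spawn a e e')) (.res a (.par (.actor a [] e) (.expr e')))
  | spawn : ∀ {b M a e e'}, ¬ fnMail a M →
      Step (.actor b M (.spawn a e e')) (.res a (.par (.actor b M e') (.actor a [] e)))
  | send : ∀ {a M e b M' m cs e'},
      Step (.par (.actor a M e) (.actor b M' (.send (.name a) m (cs.map Ident.name) e')))
           (.par (.actor a (M ++ [(m, cs)]) e) (.actor b M' e'))
  | receive : ∀ {a M M' m cs bs xs ej}, (m, xs, ej) ∈ bs → xs.length = cs.length →
      Step (.actor a (M ++ (m, cs) :: M') (.react bs))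
           (.actor a (M ++ M') (Expr.substs ej cs xs))
  | parL : ∀ {F1 F1' F2}, Step F1 F1' → Step (.par F1 F2) (.par F1' F2)
  | res : ∀ {a F F'}, Step F F' → Step (.res a F) (.res a F')
  | struct : ∀ {F G G' F'}, SC F G → Step G G' → SC G' F' → Step F F'

/-- Multi-step reduction. -/
def Steps : Config → Config → Prop := Relation.ReflTransGen Step

def Config.resMany : List Name → Config → Config
  | [], F => F
  | a :: as, F => .res a (Config.resMany as F)

def parActors : List (Name × Mailbox × Expr) → Config
  | [] => Config.null
  | [t] => .actor t.1 t.2.1 t.2.2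
  | t :: ts => .par (.actor t.1 t.2.1 t.2.2) (parActors ts)

/-- `Contains F₀ F` : F contains F₀ as a parallel/restriction sub-configuration. -/
inductive Contains : Config → Config → Prop where
  | refl : ∀ {F}, Contains F F
  | parL : ∀ {F F1 F2}, Contains F F1 → Contains F (.par F1 F2)
  | parR : ∀ {F F1 F2}, Contains F F2 → Contains F (.par F1 F2)
  | res : ∀ {F a F'}, Contains F F' → Contains F (.res a F')

/-! ## Behavioural types (basic system) -/

/-- Behavioural types: `tend` is `end`, `out m T̃ S` is `!m(T̃).S`, and
`branch bs` is an input choice whose branches `(flag, m, T̃, S)` stand for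
`?m(T̃).S`, marked when `flag = true`.  In this refined system an output action
`out Tt m T̃ S` (written Tt!m(T̃).S) also records the sequence `Tt` performed by
the target actor after processing the message m. -/
inductive Ty : Type where
  | tend : Ty
  | out : Ty → Label → List Ty → Ty → Ty
  | branch : List (Bool × Label × List Ty × Ty) → Ty

abbrev Branch := Bool × Label × List Ty × Ty

/-- `S` contains no marking (in its own action sequence). -/
inductive NoMark : Ty → Prop where
  | tend : NoMark .tend
  | out : ∀ {Tt m args S}, NoMark S → NoMark (.out Tt m args S)
  | branch : ∀ {bs : List Branch}, (∀ b ∈ bs, b.1 = false) →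
      (∀ b ∈ bs, NoMark b.2.2.2) → NoMark (.branch bs)

/-- Two sequences are equal but for the markings. -/
inductive EqMk : Ty → Ty → Prop where
  | tend : EqMk .tend .tend
  | out : ∀ {Tt m args S S'}, EqMk S S' → EqMk (.out Tt m args S) (.out Tt m args S')
  | branch : ∀ {bs bs' : List Branch}, bs.length = bs'.length →
      (∀ (i : ℕ) (b b' : Branch), bs[i]? = some b → bs'[i]? = some b' →
        b.2.1 = b'.2.1 ∧ b.2.2.1 = b'.2.2.1) →
      (∀ (i : ℕ) (b b' : Branch), bs[i]? = some b → bs'[i]? = some b' →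
        EqMk b.2.2.2 b'.2.2.2) →
      EqMk (.branch bs) (.branch bs')

/-- `Suffix S S'` : S ≪ S', i.e. S is a suffix of S' independently of the markings. -/
inductive Suffix : Ty → Ty → Prop where
  | tend : ∀ {S}, Suffix .tend S
  | eq : ∀ {S S'}, EqMk S S' → Suffix S S'
  | out : ∀ {S Tt m args S'}, Suffix S S' → Suffix S (.out Tt m args S')
  | branch : ∀ {S : Ty} {bs : List Branch} {b : Branch}, b ∈ bs →
      Suffix S b.2.2.2 → Suffix S (.branch bs)

/-- The merge-mark partial operation: `Merge S S' S''` means S ⊎ S' = S''. -/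
inductive Merge : Ty → Ty → Ty → Prop where
  | tend : Merge .tend .tend .tend
  | out : ∀ {Tt m args S S' S''}, Merge S S' S'' →
      Merge (.out Tt m args S) (.out Tt m args S') (.out Tt m args S'')
  | branchAll : ∀ {bs bs' bs'' : List Branch}, bs.length = bs'.length → bs''.length = bs.length →
      (∀ (i : ℕ) (b b' b'' : Branch), bs[i]? = some b → bs'[i]? = some b' → bs''[i]? = some b'' →
        b.1 = false ∧ b'.1 = false ∧ b''.1 = false ∧
        b'.2.1 = b.2.1 ∧ b''.2.1 = b.2.1 ∧ b'.2.2.1 = b.2.2.1 ∧ b''.2.2.1 = b.2.2.1) →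
      (∀ (i : ℕ) (b b' b'' : Branch), bs[i]? = some b → bs'[i]? = some b' → bs''[i]? = some b'' →
        Merge b.2.2.2 b'.2.2.2 b''.2.2.2) →
      Merge (.branch bs) (.branch bs') (.branch bs'')
  | branchMark : ∀ {bs bs' bs'' : List Branch} {j : ℕ} {m : Label} {Ts : List Ty} {S S' S'' : Ty},
      bs.length = bs'.length → bs''.length = bs.length →
      (∀ (i : ℕ), i ≠ j → bs'[i]? = bs[i]? ∧ bs''[i]? = bs[i]?) →
      (∀ (i : ℕ) (b : Branch), i ≠ j → bs[i]? = some b → b.1 = false) →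
      bs[j]? = some (false, m, Ts, S) →
      bs'[j]? = some (true, m, Ts, S') →
      bs''[j]? = some (true, m, Ts, S'') →
      Merge S S' S'' →
      Merge (.branch bs) (.branch bs') (.branch bs'')
  | symm : ∀ {S S' S''}, Merge S S' S'' → Merge S' S S''

/-- `SubMerge S' S S''` : S' ⊎⊂ S = S'', the extension of ⊎ where S' may be a
(marking-independent) suffix of S; it never descends into a marked choice. -/
inductive SubMerge : Ty → Ty → Ty → Prop where
  | of_merge : ∀ {T1 T2 T3}, Merge T1 T2 T3 → SubMerge T1 T2 T3
  | out : ∀ {S' Tt m args S S''}, Suffix S' S → SubMerge S' S S'' →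
      SubMerge S' (.out Tt m args S) (.out Tt m args S'')
  | branch : ∀ {S' : Ty} {bs bs'' : List Branch} {j : ℕ} {m : Label} {Ts : List Ty} {S S'' : Ty},
      (∀ (i : ℕ) (b : Branch), bs[i]? = some b → b.1 = false) →
      bs''.length = bs.length →
      (∀ (i : ℕ), i ≠ j → bs''[i]? = bs[i]?) →
      bs[j]? = some (false, m, Ts, S) →
      bs''[j]? = some (false, m, Ts, S'') →
      Suffix S' S → SubMerge S' S S'' →
      SubMerge S' (.branch bs) (.branch bs'')

/-- `SubstMerge S' S S''` : the variant of S' ⊎ S used in the Substitution Lemma,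
where S' ≪ S and descending into a marked branch is additionally allowed. -/
inductive SubstMerge : Ty → Ty → Ty → Prop where
  | of_merge : ∀ {T1 T2 T3}, Merge T1 T2 T3 → SubstMerge T1 T2 T3
  | out : ∀ {S' Tt m args S S''}, Suffix S' S → SubstMerge S' S S'' →
      SubstMerge S' (.out Tt m args S) (.out Tt m args S'')
  | branch : ∀ {S' : Ty} {bs bs'' : List Branch} {j : ℕ} {m : Label} {Ts : List Ty} {S S'' : Ty},
      (∀ (i : ℕ) (b : Branch), bs[i]? = some b → b.1 = false) →
      bs''.length = bs.length →
      (∀ (i : ℕ), i ≠ j → bs''[i]? = bs[i]?) →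
      bs[j]? = some (false, m, Ts, S) →
      bs''[j]? = some (false, m, Ts, S'') →
      Suffix S' S → SubstMerge S' S S'' →
      SubstMerge S' (.branch bs) (.branch bs'')
  | branchMarked : ∀ {S' : Ty} {bs bs'' : List Branch} {j : ℕ} {m : Label} {Ts : List Ty} {S S'' : Ty},
      bs''.length = bs.length →
      (∀ (i : ℕ), i ≠ j → bs''[i]? = bs[i]?) →
      bs[j]? = some (true, m, Ts, S) →
      bs''[j]? = some (true, m, Ts, S'') →
      Suffix S' S → SubstMerge S' S S'' →
      SubstMerge S' (.branch bs) (.branch bs'')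

/-- `Unmark U U' m Ts S` : U contains (along its sequence of actions) a marked
input choice whose marked branch is `?m(Ts).S`; U' is U with that marking removed. -/
inductive Unmark : Ty → Ty → Label → List Ty → Ty → Prop where
  | here : ∀ {bs : List Branch} {j : ℕ} {m : Label} {Ts : List Ty} {S : Ty},
      bs[j]? = some (true, m, Ts, S) →
      Unmark (.branch bs) (.branch (bs.set j (false, m, Ts, S))) m Ts S
  | out : ∀ {U U' m Ts S Tt m' args}, Unmark U U' m Ts S →
      Unmark (.out Tt m' args U) (.out Tt m' args U') m Ts S
  | deep : ∀ {bs : List Branch} {j : ℕ} {fl : Bool} {m' : Label} {Ts' : List Ty} {C C' : Ty}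
      {m : Label} {Ts : List Ty} {S : Ty},
      bs[j]? = some (fl, m', Ts', C) → Unmark C C' m Ts S →
      Unmark (.branch bs) (.branch (bs.set j (fl, m', Ts', C'))) m Ts S

/-- `InInputs m Ts S U` : the input action ?m(Ts).S belongs to Inputs(U). -/
inductive InInputs : Label → List Ty → Ty → Ty → Prop where
  | out : ∀ {m Ts S Tt m' args U}, InInputs m Ts S U → InInputs m Ts S (.out Tt m' args U)
  | here : ∀ {m : Label} {Ts : List Ty} {S : Ty} {fl : Bool} {bs : List Branch},
      (fl, m, Ts, S) ∈ bs → InInputs m Ts S (.branch bs)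
  | deep : ∀ {m : Label} {Ts : List Ty} {S : Ty} {b : Branch} {bs : List Branch},
      b ∈ bs → InInputs m Ts S b.2.2.2 → InInputs m Ts S (.branch bs)

-- fully-marked(S): mark every top level input of S.
mutual
  def fullyMark : Ty → Ty
    | .tend => .tend
    | .out Tt m args S => .out Tt m args (fullyMark S)
    | .branch bs => .branch (fullyMarkList bs)
  def fullyMarkList : List Branch → List Branch
    | [] => []
    | (_, m, Ts, S) :: bs => (true, m, Ts, fullyMark S) :: fullyMarkList bs
end

/-! ## Type environments, escape environments and typing -/

abbrev TyEnv := Ident → Option Ty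

def TyEnv.empty : TyEnv := fun _ => none

/-- Environment update Γ; u:T. -/
def TyEnv.update (Γ : TyEnv) (u : Ident) (T : Ty) : TyEnv :=
  fun v => if v = u then some T else Γ v

/-- Add a list of formal parameters with their types. -/
def TyEnv.updates : TyEnv → List Var → List Ty → TyEnv
  | Γ, x :: xs, T :: Ts => TyEnv.updates (Γ.update (.var x) T) xs Ts
  | Γ, _, _ => Γ

def NoMarkEnv (Γ : TyEnv) : Prop := ∀ u T, Γ u = some T → NoMark T

/-- Pointwise merging of two environments with the same domain. -/
def EnvMerge (Γ1 Γ2 Γ : TyEnv) : Prop :=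
  ∀ u, (Γ1 u = none ∧ Γ2 u = none ∧ Γ u = none) ∨
    ∃ T1 T2 T, Γ1 u = some T1 ∧ Γ2 u = some T2 ∧ Γ u = some T ∧ Merge T1 T2 T

/-- Environment consumption Γ' ≪ Γ. -/
def EnvLe (Γ' Γ : TyEnv) : Prop :=
  ∀ u, (Γ' u = none ∧ Γ u = none) ∨
    ∃ T' T, Γ' u = some T' ∧ Γ u = some T ∧ Suffix T' T

/-- Escape environments: choices of alternative type environments. -/
inductive Esc : Type where
  | env : TyEnv → Esc
  | choice : List Esc → Esc

def Esc.empty : Esc := .env TyEnv.empty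

mutual
  def Esc.mapEnv : (TyEnv → TyEnv) → Esc → Esc
    | f, .env Γ => .env (f Γ)
    | f, .choice ds => .choice (Esc.mapEnvList f ds)
  def Esc.mapEnvList : (TyEnv → TyEnv) → List Esc → List Esc
    | _, [] => []
    | f, d :: ds => Esc.mapEnv f d :: Esc.mapEnvList f ds
end

/-- Escape-environment extension Δ, u:T. -/
def Esc.ext (Δ : Esc) (u : Ident) (T : Ty) : Esc :=
  Esc.mapEnv (fun Γ => Γ.update u T) Δ

/-- Escape-environment extension Δ, x̃:T̃. -/
def Esc.extVars (Δ : Esc) (xs : List Var) (Ts : List Ty) : Esc :=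
  Esc.mapEnv (fun Γ => Γ.updates xs Ts) Δ

def envUnion (Γ1 Γ2 : TyEnv) : TyEnv := fun u => (Γ1 u).orElse (fun _ => Γ2 u)

mutual
  /-- Combination Δ₁, Δ₂ of escape environments. -/
  def Esc.comb : Esc → Esc → Esc
    | .env Γ1, Δ2 => Esc.mapEnv (envUnion Γ1) Δ2
    | .choice ds, Δ2 => .choice (Esc.combList ds Δ2)
  def Esc.combList : List Esc → Esc → List Esc
    | [], _ => []
    | d :: ds, Δ2 => Esc.comb d Δ2 :: Esc.combList ds Δ2
end

/-- u ∈ Dom(Δ). -/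
inductive Esc.Mem : Ident → Esc → Prop where
  | env : ∀ {u Γ T}, Γ u = some T → Esc.Mem u (.env Γ)
  | choice : ∀ {u d ds}, d ∈ ds → Esc.Mem u d → Esc.Mem u (.choice ds)

-- Escape-environment consumption Δ' ≪ Δ.
mutual
  inductive EscLe : Esc → Esc → Prop where
    | env : ∀ {Γ' Γ : TyEnv},
        (∀ u T', Γ' u = some T' → ∃ T, Γ u = some T ∧ Suffix T' T) →
        EscLe (.env Γ') (.env Γ)
    | choice : ∀ {ds' ds : List Esc}, (∀ d' ∈ ds', EscLeMem d' ds) →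
        EscLe (.choice ds') (.choice ds)
    | collapse : ∀ {Δ' d ds}, d ∈ ds → EscLe Δ' d → EscLe Δ' (.choice ds)
  /-- Δ' is ≪-below some member of the list. -/
  inductive EscLeMem : Esc → List Esc → Prop where
    | head : ∀ {d' d ds}, EscLe d' d → EscLeMem d' (d :: ds)
    | tail : ∀ {d' d ds}, EscLeMem d' ds → EscLeMem d' (d :: ds)
end

/-- The typing judgement Γ ⊢ [a↦M] for mailboxes (rules (Type NoMail)/(Type Mailbox)). -/
def MailOK (Γ : TyEnv) (a : Name) (M : Mailbox) : Prop :=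
  ∃ Sa, Γ (.name a) = some Sa ∧
    ∀ msg ∈ M, ∀ Ts S, InInputs msg.1 Ts S Sa →
      List.Forall₂ (fun (b : Name) (T : Ty) =>
        (b = a → Suffix T S) ∧
        (b ≠ a → ∃ V, Γ (.name b) = some V ∧ Suffix T V)) msg.2 Ts

/-- The typing judgement Γ ⊢_a e ▷ Δ for actor bodies. -/
inductive TypesE : TyEnv → Name → Expr → Esc → Prop where
  | tend : ∀ {Γ : TyEnv} {a : Name},
      Γ (.name a) = some .tend → NoMarkEnv Γ →
      TypesE Γ a .nil Esc.empty
  | send : ∀ {Γ : TyEnv} {a : Name} {u : Ident} {m : Label} {args : List Ident}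
      {Ts : List Ty} {Sc Sa U U' S : Ty} {e : Expr} {Δ : Esc},
      Γ (.name a) = some (.out Sc m Ts Sa) →
      Γ u = some U →
      Unmark U U' m Ts S →
      EqMk Sc S →
      List.Forall₂ (fun (arg : Ident) (T : Ty) =>
        (arg = .name a → Suffix T Sa) ∧
        (arg ≠ .name a → arg = u → Suffix T S) ∧
        (arg ≠ .name a → arg ≠ u → ∃ V, Γ arg = some V ∧ Suffix T V)) args Ts →
      TypesE ((Γ.update u U').update (.name a) Sa) a e Δ →
      TypesE Γ a (.send u m args e) Δ
  | receive : ∀ {Γ : TyEnv} {a : Name} {ebs : List (Label × List Var × Expr)}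
      {tbs : List Branch} {Δs : List Esc},
      Γ (.name a) = some (.branch tbs) →
      (∀ b ∈ tbs, b.1 = false) →
      ebs.length = tbs.length →
      Δs.length = tbs.length →
      (∀ (i : ℕ) (eb : Label × List Var × Expr) (tb : Branch),
        ebs[i]? = some eb → tbs[i]? = some tb →
        eb.1 = tb.2.1 ∧ eb.2.1.length = tb.2.2.1.length) →
      (∀ (i : ℕ) (eb : Label × List Var × Expr) (tb : Branch) (Δi : Esc),
        ebs[i]? = some eb → tbs[i]? = some tb → Δs[i]? = some Δi →
        TypesE ((Γ.update (.name a) tb.2.2.2).updates eb.2.1 tb.2.2.1) a eb.2.2 Δi) →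
      TypesE Γ a (.react ebs)
        (.choice ((List.zip Δs (List.zip ebs tbs)).map
          (fun p => Esc.extVars p.1 p.2.1.2.1 p.2.2.2.2.1)))
  | spawn : ∀ {Γ1 Γ2 Γ : TyEnv} {a b : Name} {S1 S2 S : Ty} {e1 e2 : Expr} {Δ1 Δ2 : Esc},
      EnvMerge Γ1 Γ2 Γ →
      Γ1 (.name b) = none → Γ2 (.name b) = none →
      TypesE (Γ1.update (.name b) S1) b e1 Δ1 →
      TypesE (Γ2.update (.name b) S2) a e2 Δ2 →
      ¬ Esc.Mem (.name b) (Δ1.comb Δ2) →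
      Merge S1 S2 S →
      TypesE Γ a (.spawn b e1 e2) ((Δ1.comb Δ2).ext (.name b) S)

/-- The environment composition Γ₁,F₁ ⊙ Γ₂,F₂ = Γ of rule (Type Para). -/
def EnvComp (Γ1 : TyEnv) (F1 : Config) (Γ2 : TyEnv) (F2 : Config) (Γ : TyEnv) : Prop :=
  ∀ u : Ident,
    ((∃ n, u = .name n ∧ ActiveIn n F1) →
      ((Γ1 u = none ∧ Γ2 u = none ∧ Γ u = none) ∨
       ∃ T1 T2 T, Γ1 u = some T1 ∧ Γ2 u = some T2 ∧ Γ u = some T ∧ SubMerge T1 T2 T)) ∧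
    ((∃ n, u = .name n ∧ ActiveIn n F2) →
      ((Γ1 u = none ∧ Γ2 u = none ∧ Γ u = none) ∨
       ∃ T1 T2 T, Γ1 u = some T1 ∧ Γ2 u = some T2 ∧ Γ u = some T ∧ SubMerge T2 T1 T)) ∧
    ((¬ ∃ n, u = .name n ∧ (ActiveIn n F1 ∨ ActiveIn n F2)) →
      ((Γ1 u = none ∧ Γ2 u = none ∧ Γ u = none) ∨
       ∃ T1 T2 T, Γ1 u = some T1 ∧ Γ2 u = some T2 ∧ Γ u = some T ∧ Merge T2 T1 T))

/-- The typing judgement Γ ⊢ F ▷ Δ for configurations. -/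
inductive TypesC : TyEnv → Config → Esc → Prop where
  | actor : ∀ {Γ : TyEnv} {a : Name} {M : Mailbox} {e : Expr} {Δ : Esc},
      MailOK Γ a M → TypesE Γ a e Δ →
      TypesC Γ (.actor a M e) Δ
  | res : ∀ {Γ : TyEnv} {a : Name} {T : Ty} {F : Config} {Δ : Esc},
      Γ (.name a) = none →
      TypesC (Γ.update (.name a) T) F Δ →
      ¬ Esc.Mem (.name a) Δ →
      TypesC Γ (.res a F) (Δ.ext (.name a) T)
  | par : ∀ {Γ1 Γ2 Γ : TyEnv} {F1 F2 : Config} {Δ1 Δ2 : Esc},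
      TypesC Γ1 F1 Δ1 → TypesC Γ2 F2 Δ2 →
      (∀ n, ¬ (ActiveIn n F1 ∧ ActiveIn n F2)) →
      EnvComp Γ1 F1 Γ2 F2 Γ →
      TypesC Γ (.par F1 F2) (Δ1.comb Δ2)
  | dead : ∀ {Γ : TyEnv}, NoMarkEnv Γ → TypesC Γ (.expr .nil) Esc.empty
  | topSpawn : ∀ {Γ1 Γ2 Γ : TyEnv} {b : Name} {S1 S2 S : Ty} {e1 e2 : Expr} {Δ1 Δ2 : Esc},
      EnvMerge Γ1 Γ2 Γ →
      Γ1 (.name b) = none → Γ2 (.name b) = none →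
      TypesE (Γ1.update (.name b) S1) b e1 Δ1 →
      TypesC (Γ2.update (.name b) S2) (.expr e2) Δ2 →
      ¬ Esc.Mem (.name b) (Δ1.comb Δ2) →
      Merge S1 S2 S →
      TypesC Γ (.expr (.spawn b e1 e2)) ((Δ1.comb Δ2).ext (.name b) S)

/-! ## Balanced escape environments -/

def TyEnv.erase (Γ : TyEnv) (a : Name) (xs : List Var) : TyEnv :=
  fun u => match u with
    | .name b => if b = a then none else Γ u
    | .var x => if x ∈ xs then none else Γ u

/-- Iterated merge T ⊎ T₁ ⊎ … ⊎ T_k (each T_i a suffix of the current result). -/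
inductive FoldMergeSuffix : Ty → List Ty → Ty → Prop where
  | nil : ∀ {T}, FoldMergeSuffix T [] T
  | cons : ∀ {T T1 Tm Ts T''}, SubstMerge T1 T Tm → FoldMergeSuffix Tm Ts T'' →
      FoldMergeSuffix T (T1 :: Ts) T''

/-- Balancedness of a single type environment. -/
inductive BalancedEnv : TyEnv → Prop where
  | vars : ∀ {Γ : TyEnv},
      (∀ n : Name, Γ (.name n) = none) →
      (∀ (x : Var) (T : Ty), Γ (.var x) = some T → NoMark T) →
      BalancedEnv Γ
  | step : ∀ {Γ : TyEnv} {a : Name} {T T' : Ty} {xs : List Var} {Ts : List Ty},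
      Γ (.name a) = some T →
      xs.length = Ts.length →
      (∀ (i : ℕ) (x : Var) (Tx : Ty), xs[i]? = some x → Ts[i]? = some Tx →
        Γ (.var x) = some Tx ∧ Suffix Tx T) →
      FoldMergeSuffix T Ts T' →
      T' = fullyMark T →
      BalancedEnv (Γ.erase a xs) →
      BalancedEnv Γ

/-- Balancedness of an escape environment. -/
inductive BalancedEsc : Esc → Prop where
  | env : ∀ {Γ}, BalancedEnv Γ → BalancedEsc (.env Γ)
  | choice : ∀ {ds}, (∀ d ∈ ds, BalancedEsc d) → BalancedEsc (.choice ds)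


namespace DeadlockP

def mL : Label := 0
def nL : Label := 1
def aN : Name := 0
def bN : Name := 1

/-- Body of actor b: react{n ⇒ a!m}. -/
def bodyB : Expr := .react [(nL, [], .send (.name aN) mL [] .nil)]
/-- Continuation of actor a: react{m ⇒ b!n}. -/
def contA : Expr := .react [(mL, [], .send (.name bN) nL [] .nil)]
/-- P = val a = actor{ val b = actor{react{n ⇒ a!m}}; react{m ⇒ b!n} }. -/
def P : Expr := .spawn aN (.spawn bN bodyB contA) .nil

end DeadlockP

/-! In any derivation, `b`'s body forces `b : [?n. Tb!m.end]` and `a`'s continuation forces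
`a : [?m. Ta!n.end]`, where `Tb` (resp. `Ta`) is recorded by the send to `a` (resp. `b`).
Since each actor's view of its peer is merged with the peer's own type, rule (Type Send) makes
`Tb` equal up to markings to what `a` does after `m`, i.e. `Ta!n.end`, and symmetrically `Ta`
to `Tb!m.end`. Then `Ta` would be a proper subterm of itself, impossible for finite types. -/

theorem TyEnv.update_self (Γ : TyEnv) (u : Ident) (T : Ty) : Γ.update u T u = some T :=
  if_pos rfl

theorem TyEnv.update_of_ne (Γ : TyEnv) {u v : Ident} (T : Ty) (h : v ≠ u) :
    Γ.update u T v = Γ v :=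
  if_neg h

theorem EnvMerge.exists_of_some {Γ1 Γ2 Γ : TyEnv} {u : Ident} {T : Ty} (h : EnvMerge Γ1 Γ2 Γ)
    (hT : Γ u = some T) : ∃ T1 T2, Γ1 u = some T1 ∧ Γ2 u = some T2 ∧ Merge T1 T2 T := by
  rcases h u with ⟨-, -, hnone⟩ | ⟨T1, T2, T', h1, h2, hT', hm⟩
  · simp [hnone] at hT
  · obtain rfl : T' = T := Option.some.inj (hT'.symm.trans hT)
    exact ⟨T1, T2, h1, h2, hm⟩

theorem Ty.not_out_target_cycle {A B W W' : Ty} {l l' : Label} {args args' : List Ty}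
    (hA : A = .out B l args W) (hB : B = .out A l' args' W') : False := by
  subst hB
  have := congrArg sizeOf hA
  simp only [Ty.out.sizeOf_spec] at this
  omega

theorem EqMk.exists_eq_out {T Tt S : Ty} {m : Label} {args : List Ty}
    (h : EqMk T (.out Tt m args S)) : ∃ W, T = .out Tt m args W := by
  cases h
  exact ⟨_, rfl⟩

theorem Merge.tend_inv {T1 T2 T3 : Ty} (h : Merge T1 T2 T3) (ht : T1 = .tend ∨ T2 = .tend) :
    T1 = .tend ∧ T2 = .tend := by
  induction h with
  | tend => exact ⟨rfl, rfl⟩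
  | out => simp at ht
  | branchAll => simp at ht
  | branchMark => simp at ht
  | symm _ ih => exact (ih ht.symm).symm

theorem Merge.out_inv {T1 T2 T3 Tt : Ty} {m : Label} {args : List Ty} (h : Merge T1 T2 T3)
    (ho : (∃ S1, T1 = .out Tt m args S1) ∨ ∃ S2, T2 = .out Tt m args S2) :
    ∃ S1 S2 S3, T1 = .out Tt m args S1 ∧ T2 = .out Tt m args S2 ∧ Merge S1 S2 S3 := by
  induction h with
  | @out _ _ _ S S' S'' hm =>
    obtain ⟨_, hS⟩ | ⟨_, hS⟩ := ho <;> cases hS <;> exact ⟨S, S', S'', rfl, rfl, hm⟩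
  | symm _ ih =>
    obtain ⟨S1, S2, S3, h1, h2, hm⟩ := ih ho.symm
    exact ⟨S2, S1, S3, h2, h1, hm.symm⟩
  | _ => simp at ho

theorem Merge.single_branch_inv {T1 T2 T3 : Ty} {m : Label} {Ts : List Ty} (h : Merge T1 T2 T3)
    (hb : (∃ f S1, T1 = .branch [(f, m, Ts, S1)]) ∨ ∃ f S2, T2 = .branch [(f, m, Ts, S2)]) :
    ∃ f1 S1 f2 S2 S3, T1 = .branch [(f1, m, Ts, S1)] ∧ T2 = .branch [(f2, m, Ts, S2)] ∧
      Merge S1 S2 S3 := by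
  induction h with
  | @branchAll bs bs' bs'' hlen hlen'' hflags hmerge =>
    have hone : bs.length = 1 := by
      obtain ⟨_, _, hS⟩ | ⟨_, _, hS⟩ := hb <;> cases hS
      · rfl
      · exact hlen
    obtain ⟨⟨f, l, Us, S⟩, rfl⟩ := List.length_eq_one_iff.mp hone
    obtain ⟨⟨f', l', Us', S'⟩, rfl⟩ := List.length_eq_one_iff.mp hlen.symm
    obtain ⟨b'', rfl⟩ := List.length_eq_one_iff.mp hlen''
    obtain ⟨-, -, -, rfl, -, rfl, -⟩ := hflags 0 _ _ _ rfl rfl rfl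
    obtain ⟨_, _, hS⟩ | ⟨_, _, hS⟩ := hb <;> cases hS <;>
      exact ⟨_, _, _, _, _, rfl, rfl, hmerge 0 _ _ _ rfl rfl rfl⟩
  | @branchMark bs bs' bs'' j l Us S S' S'' hlen _ _ _ hj hj' _ hm =>
    have hone : bs.length = 1 := by
      obtain ⟨_, _, hS⟩ | ⟨_, _, hS⟩ := hb <;> cases hS
      · rfl
      · exact hlen
    obtain ⟨b, rfl⟩ := List.length_eq_one_iff.mp hone
    obtain ⟨b', rfl⟩ := List.length_eq_one_iff.mp hlen.symm
    obtain rfl : j = 0 := by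
      by_contra hj0
      rw [List.getElem?_eq_none (by simp only [List.length_singleton]; omega)] at hj
      cases hj
    simp only [List.getElem?_cons_zero, Option.some.injEq] at hj hj'
    subst hj hj'
    obtain ⟨_, _, hS⟩ | ⟨_, _, hS⟩ := hb <;> cases hS <;>
      exact ⟨_, _, _, _, _, rfl, rfl, hm⟩
  | symm _ ih =>
    obtain ⟨f1, S1, f2, S2, S3, h1, h2, hm⟩ := ih hb.symm
    exact ⟨f2, S2, f1, S1, S3, h2, h1, hm.symm⟩
  | _ => simp at hb

theorem Unmark.single_output_inv {fl : Bool} {m m' l : Label} {Ts Ts' args : List Ty}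
    {K U' S : Ty} (h : Unmark (.branch [(fl, m, Ts, .out K l args .tend)]) U' m' Ts' S) :
    S = .out K l args .tend := by
  cases h with
  | here hj =>
    rename_i j
    cases j with
    | zero =>
      simp only [List.getElem?_cons_zero, Option.some.injEq, Prod.mk.injEq] at hj
      exact hj.2.2.2.symm
    | succ => simp at hj
  | deep hj hu =>
    rename_i j _ _ _ _ _
    cases j with
    | zero =>
      simp only [List.getElem?_cons_zero, Option.some.injEq, Prod.mk.injEq] at hj
      obtain ⟨-, -, -, rfl⟩ := hj
      cases hu with
      | out hu => cases hu
    | succ => simp at hj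

-- `U` is a peer's view of an actor whose own type is `[?m.K!l.end]`.
theorem Unmark.eq_of_merge_single_output {U U' Z S K : Ty} {m m' l : Label}
    {Ts Ts' args : List Ty}
    (hmerge : Merge U (.branch [(false, m, Ts, .out K l args .tend)]) Z)
    (hu : Unmark U U' m' Ts' S) : S = .out K l args .tend := by
  obtain ⟨f, C, _, _, _, rfl, hK, hC⟩ := hmerge.single_branch_inv (.inr ⟨_, _, rfl⟩)
  cases hK
  obtain ⟨C1, _, _, rfl, hK', hC1⟩ := hC.out_inv (.inr ⟨_, rfl⟩)
  cases hK'
  obtain ⟨rfl, -⟩ := hC1.tend_inv (.inr rfl)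
  exact hu.single_output_inv

theorem TypesE.react_single_inv {Γ : TyEnv} {a : Name} {l : Label} {e : Expr} {Δ : Esc}
    (h : TypesE Γ a (.react [(l, [], e)]) Δ) :
    ∃ S Δ', Γ (.name a) = some (.branch [(false, l, [], S)]) ∧
      TypesE (Γ.update (.name a) S) a e Δ' := by
  cases h with
  | @receive _ _ _ tbs Δs hΓ hunmarked hlen hlenΔ hlab hbody =>
    obtain ⟨⟨f, l', Ts, S⟩, rfl⟩ := List.length_eq_one_iff.mp hlen.symm
    obtain ⟨Δ', rfl⟩ := List.length_eq_one_iff.mp hlenΔ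
    obtain ⟨rfl, hTs⟩ := hlab 0 _ _ rfl rfl
    obtain rfl : Ts = [] := List.eq_nil_of_length_eq_zero hTs.symm
    obtain rfl : f = false := hunmarked _ List.mem_cons_self
    exact ⟨S, Δ', hΓ, hbody 0 _ _ _ rfl rfl rfl⟩

theorem TypesE.send_nil_inv {Γ : TyEnv} {a : Name} {u : Ident} {m : Label} {Δ : Esc}
    (h : TypesE Γ a (.send u m [] .nil) Δ) :
    ∃ Sc U U' S, Γ (.name a) = some (.out Sc m [] .tend) ∧ Γ u = some U ∧
      Unmark U U' m [] S ∧ EqMk Sc S := by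
  cases h with
  | send hΓ hU hu heq hargs hcont =>
    cases hargs
    cases hcont with
    | tend hend _ =>
      rw [TyEnv.update_self] at hend
      cases hend
      exact ⟨_, _, _, _, hΓ, hU, hu, heq⟩

theorem TypesE.react_send_inv {Γ : TyEnv} {a c : Name} {l l' : Label} {Δ : Esc} (hac : c ≠ a)
    (h : TypesE Γ a (.react [(l, [], .send (.name c) l' [] .nil)]) Δ) :
    ∃ Sc U U' S, Γ (.name a) = some (.branch [(false, l, [], .out Sc l' [] .tend)]) ∧
      Γ (.name c) = some U ∧ Unmark U U' l' [] S ∧ EqMk Sc S := by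
  obtain ⟨T, _, hT, hsend⟩ := h.react_single_inv
  obtain ⟨Sc, U, U', S, hout, hU, hu, heq⟩ := hsend.send_nil_inv
  rw [TyEnv.update_self] at hout
  rw [TyEnv.update_of_ne _ _ (by simpa using hac)] at hU
  cases hout
  exact ⟨Sc, U, U', S, hT, hU, hu, heq⟩

open DeadlockP in
/-- the deadlocking program P is not well typed in the refined
type system: no escape environment Δ makes ∅ ⊢ P ▷ Δ derivable. -/
theorem deadlock_not_typable :
    ¬ ∃ Δ : Esc, TypesC TyEnv.empty (.expr P) Δ := by
  rintro ⟨Δ, hP⟩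
  obtain ⟨Γ, Sa, Δa, hspawn⟩ :
      ∃ (Γ : TyEnv) (Sa : Ty) (Δa : Esc),
        TypesE (Γ.update (.name aN) Sa) aN (.spawn bN bodyB contA) Δa := by
    cases hP with
    | topSpawn _ _ _ h _ _ _ => exact ⟨_, _, _, h⟩
  cases hspawn with
  | spawn hEnv _ _ hB hA _ hmergeB =>
    have hab : Ident.name aN ≠ .name bN := by decide
    obtain ⟨Ua, Ta, hUa, hTa, hmergeA⟩ := hEnv.exists_of_some (TyEnv.update_self _ _ _)
    obtain ⟨Sc, Ua', _, S, hTb, hUa', hua, heqa⟩ := hB.react_send_inv (by decide)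
    obtain ⟨Sc', Ub, _, S', hTa', hUb, hub, heqb⟩ := hA.react_send_inv (by decide)
    rw [TyEnv.update_of_ne _ _ hab, hUa] at hUa'
    rw [TyEnv.update_of_ne _ _ hab, hTa] at hTa'
    rw [TyEnv.update_self] at hTb hUb
    cases hUa'; cases hTa'; cases hTb; cases hUb
    obtain rfl := hua.eq_of_merge_single_output hmergeA
    obtain rfl := hub.eq_of_merge_single_output hmergeB.symm
    obtain ⟨W, hSc⟩ := heqa.exists_eq_out
    obtain ⟨W', hSc'⟩ := heqb.exists_eq_out
    exact Ty.not_out_target_cycle hSc hSc'
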